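/- arXiv:1407.4539 — 2 statements merged into one kernel-verified Lean document; each statement's English description precedes it below -/
import Mathlib

section
/- For η > ε > 0, (2/θ) ∫_ε^η (r - ε) c(r) dr = (1/(β²θ²))[Li₂(1 - e^{-2βθη}) - Li₂(1 - e^{-2βθε})] + (2ε/(βθ)) log((1 - e^{-2βθε})/(1 - e^{-2βθη})), where Li₂(t) = -∫₀ᵗ log(1-x)/x dx is the dilogarithm and c(r) = 2θ/(e^{2βθr} - 1). -/
/-!
With `k = 2βθ` the integrand is `2θ (r - ε) / (e^{kr} - 1)`, and since
`Li₂'(t) = -log(1 - t) / t`, the function `r ↦ Li₂(1 - e^{-kr}) / k² - ε log(1 - e^{-kr}) / k`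
is an antiderivative of `(r - ε) / (e^{kr} - 1)` on `(0, ∞)`.
-/

open Real MeasureTheory

noncomputable def dilog (t : ℝ) : ℝ := -∫ x in (0 : ℝ)..t, log (1 - x) / x

lemma intervalIntegrable_log_one_sub_div {t : ℝ} (ht : t < 1) :
    IntervalIntegrable (fun x => log (1 - x) / x) volume 0 t := by
  -- Off `0` the integrand is the slope of `x ↦ log (1 - x)` at `0`, which extends continuously.
  have hcont : ContinuousOn (dslope (fun x => log (1 - x)) 0) (Set.Iio 1) := by
    refine (continuousOn_dslope (Iio_mem_nhds one_pos)).2 ⟨?_, ?_⟩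
    · exact ContinuousOn.log (by fun_prop) fun x hx => (sub_pos.2 hx).ne'
    · exact (differentiableAt_id.const_sub 1).log (by norm_num)
  refine (hcont.mono fun x hx => hx.2.trans_lt (max_lt one_pos ht)).intervalIntegrable.congr_uIoo
    fun x hx => ?_
  have hx0 : x ≠ 0 := ne_of_mem_of_not_mem hx Set.left_notMem_uIoo
  simp [dslope_of_ne _ hx0, slope_def_field]

lemma hasDerivAt_dilog {t : ℝ} (ht : t < 1) (ht0 : t ≠ 0) :
    HasDerivAt dilog (-(log (1 - t) / t)) t := by
  have hmeas : Measurable fun x : ℝ => log (1 - x) / x := by fun_prop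
  have hcont : ContinuousAt (fun x : ℝ => log (1 - x) / x) t :=
    ((continuousAt_log (by linarith)).comp (by fun_prop)).div continuousAt_id ht0
  exact (intervalIntegral.integral_hasDerivAt_right (intervalIntegrable_log_one_sub_div ht)
    hmeas.aestronglyMeasurable.stronglyMeasurableAtFilter hcont).neg

lemma one_sub_exp_neg_ne_zero {x : ℝ} (hx : x ≠ 0) : 1 - exp (-x) ≠ 0 :=
  sub_ne_zero.2 fun h => hx <| neg_eq_zero.1 <| (exp_eq_one_iff _).1 h.symm

lemma hasDerivAt_one_sub_exp_neg (x : ℝ) :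
    HasDerivAt (fun x => 1 - exp (-x)) (exp (-x)) x := by
  simpa using (hasDerivAt_neg x).exp.const_sub 1

lemma hasDerivAt_log_one_sub_exp_neg {x : ℝ} (hx : x ≠ 0) :
    HasDerivAt (fun x => log (1 - exp (-x))) (1 / (exp x - 1)) x := by
  refine ((hasDerivAt_one_sub_exp_neg x).log (one_sub_exp_neg_ne_zero hx)).congr_deriv ?_
  have := one_sub_exp_neg_ne_zero hx
  rw [exp_neg] at this ⊢
  field_simp

lemma hasDerivAt_dilog_one_sub_exp_neg {x : ℝ} (hx : x ≠ 0) :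
    HasDerivAt (fun x => dilog (1 - exp (-x))) (x / (exp x - 1)) x := by
  have hlt : 1 - exp (-x) < 1 := by linarith [exp_pos (-x)]
  refine ((hasDerivAt_dilog hlt (one_sub_exp_neg_ne_zero hx)).comp x
    (hasDerivAt_one_sub_exp_neg x)).congr_deriv ?_
  have := one_sub_exp_neg_ne_zero hx
  rw [sub_sub_cancel, log_exp]
  rw [exp_neg] at this ⊢
  field_simp

lemma integral_sub_div_exp_sub_one {k a b s : ℝ} (hk : k ≠ 0) (ha : 0 < a) (hb : 0 < b) :
    ∫ r in a..b, (r - s) / (exp (k * r) - 1)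
      = (dilog (1 - exp (-(k * b))) - dilog (1 - exp (-(k * a)))) / k ^ 2
        - s * (log (1 - exp (-(k * b))) - log (1 - exp (-(k * a)))) / k := by
  have hkr : ∀ r ∈ Set.uIcc a b, k * r ≠ 0 := fun r hr =>
    mul_ne_zero hk (lt_of_lt_of_le (lt_min ha hb) hr.1).ne'
  have hderiv : ∀ r ∈ Set.uIcc a b, HasDerivAt
      (fun r => dilog (1 - exp (-(k * r))) / k ^ 2 - s * log (1 - exp (-(k * r))) / k)
      ((r - s) / (exp (k * r) - 1)) r := by
    intro r hr
    have hlin := (hasDerivAt_id r).const_mul k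
    have hL := (hasDerivAt_dilog_one_sub_exp_neg (hkr r hr)).comp r hlin
    have hl := (hasDerivAt_log_one_sub_exp_neg (hkr r hr)).comp r hlin
    refine ((hL.div_const (k ^ 2)).sub ((hl.const_mul s).div_const k)).congr_deriv ?_
    field_simp
  have hcont : ContinuousOn (fun r => (r - s) / (exp (k * r) - 1)) (Set.uIcc a b) :=
    ContinuousOn.div (by fun_prop) (by fun_prop) fun r hr =>
      sub_ne_zero.2 fun h => hkr r hr <| (exp_eq_one_iff _).1 h
  rw [intervalIntegral.integral_eq_sub_of_hasDerivAt hderiv hcont.intervalIntegrable]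
  ring

theorem dilog_integral_identity (β θ : ℝ) (hβ : 0 < β) (hθ : 0 < θ)
    (c : ℝ → ℝ) (hc : ∀ s, c s = 2 * θ / (exp (2 * β * θ * s) - 1))
    (Li2 : ℝ → ℝ) (hLi2 : ∀ t, Li2 t = -∫ x in (0 : ℝ)..t, Real.log (1 - x) / x)
    (ε η : ℝ) (hε : 0 < ε) (hεη : ε < η) :
    (2 / θ) * ∫ r in ε..η, (r - ε) * c r
      = (1 / (β ^ 2 * θ ^ 2)) *
          (Li2 (1 - exp (-(2 * β * θ * η))) - Li2 (1 - exp (-(2 * β * θ * ε))))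
        + (2 * ε / (β * θ)) *
          Real.log ((1 - exp (-(2 * β * θ * ε))) / (1 - exp (-(2 * β * θ * η)))) := by
  obtain rfl : Li2 = dilog := funext hLi2
  have hη : 0 < η := hε.trans hεη
  have hc' : (fun r => (r - ε) * c r)
      = fun r => 2 * θ * ((r - ε) / (exp (2 * β * θ * r) - 1)) := by
    funext r
    rw [hc]
    ring
  rw [hc', intervalIntegral.integral_const_mul,
    integral_sub_div_exp_sub_one (by positivity) hε hη,
    log_div (one_sub_exp_neg_ne_zero (by positivity)) (one_sub_exp_neg_ne_zero (by positivity))]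
  field_simp
  ring
end

section
/- Let δ₁ = (1 - e^{-λ})c(r) + e^{-λ}c(r+s) and γ₁(q) = (1 - e^{-λ})c(r) + e^{-λ}c(q - s) for q ∈ (s+r, ∞). Then for q in this range, ∂_q γ₁(q) · (γ₁(q) - u(γ₁(q), s))/ψ(γ₁(q)) + c(q - s) = u(δ₁, q - s - r), where ψ(x) = βx² + 2βθx. -/
/-!
Write `a = 2βθ`. The function `c` solves the Riccati equation `c' = -ψ(c)`, so
`∂_q γ₁(q) = -e^{-λ} ψ(c(q - s))`, and the choice of `u` makes `(x - u(x, s)) / ψ(x)` collapse to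
`1 / (β (x + 2θ + c(s)))`. What remains is an identity between rational functions of
`e^{ar}`, `e^{as}`, `e^{a(q-s-r)}` and `e^{-λ}`.
-/

open Real

namespace FellerCSBP

/-- `ψ` of the statement, the branching mechanism. -/
noncomputable def branching (β θ x : ℝ) : ℝ := β * x ^ 2 + 2 * β * θ * x

/-- `u` of the statement, the Laplace exponent: the solution at time `t` of `u' = -ψ(u)`
started from `x`. -/
noncomputable def laplace (β θ x t : ℝ) : ℝ :=
  2 * θ * x / ((2 * θ + x) * exp (2 * β * θ * t) - x)

/-- `c` of the statement: `c(t) = u(∞, t)`, the rate of the extinction probability by time `t`. -/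
noncomputable def extinction (β θ t : ℝ) : ℝ := 2 * θ / (exp (2 * β * θ * t) - 1)

theorem hasDerivAt_extinction (β θ : ℝ) {t : ℝ} (ht : exp (2 * β * θ * t) ≠ 1) :
    HasDerivAt (extinction β θ) (-branching β θ (extinction β θ t)) t := by
  have hE : exp (2 * β * θ * t) - 1 ≠ 0 := sub_ne_zero.2 ht
  have hexp : HasDerivAt (fun t => exp (2 * β * θ * t) - 1)
      (exp (2 * β * θ * t) * (2 * β * θ)) t := by
    simpa using (((hasDerivAt_id t).const_mul (2 * β * θ)).exp).sub_const 1
  refine ((hasDerivAt_const t (2 * θ)).div hexp hE).congr_deriv ?_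
  simp only [branching, extinction]
  set E := exp (2 * β * θ * t)
  field_simp
  ring

theorem exp_sub_one_pos {β θ t : ℝ} (hβ : 0 < β) (hθ : 0 < θ) (ht : 0 < t) :
    0 < exp (2 * β * θ * t) - 1 :=
  sub_pos.2 (one_lt_exp_iff.2 (by positivity))

theorem extinction_pos {β θ t : ℝ} (hβ : 0 < β) (hθ : 0 < θ) (ht : 0 < t) :
    0 < extinction β θ t :=
  div_pos (by positivity) (exp_sub_one_pos hβ hθ ht)

theorem mix_extinction_pos {β θ L r r' : ℝ} (hβ : 0 < β) (hθ : 0 < θ) (hL0 : 0 ≤ L)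
    (hL1 : L ≤ 1) (hr : 0 < r) (hr' : 0 < r') :
    0 < (1 - L) * extinction β θ r + L * extinction β θ r' := by
  have hc := extinction_pos hβ hθ hr
  have hc' := extinction_pos hβ hθ hr'
  rcases hL1.lt_or_eq with hL1 | rfl
  · have : 0 < 1 - L := sub_pos.2 hL1
    positivity
  · simpa using hc'

theorem laplace_denom_pos {β θ x t : ℝ} (hβ : 0 ≤ β) (hθ : 0 < θ) (hx : 0 ≤ x) (ht : 0 ≤ t) :
    0 < (2 * θ + x) * exp (2 * β * θ * t) - x := by
  have : 1 ≤ exp (2 * β * θ * t) := one_le_exp (by positivity)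
  nlinarith

theorem sub_laplace_div_branching {β θ x s : ℝ} (hβ : 0 < β) (hθ : 0 < θ) (hx : 0 < x)
    (hs : 0 < s) :
    (x - laplace β θ x s) / branching β θ x = 1 / (β * (x + 2 * θ + extinction β θ s)) := by
  have hS := exp_sub_one_pos hβ hθ hs
  have hD := laplace_denom_pos hβ.le hθ hx.le hs.le
  rw [laplace, branching, extinction]
  set S := exp (2 * β * θ * s)
  have hsum : x + 2 * θ + 2 * θ / (S - 1) = ((2 * θ + x) * S - x) / (S - 1) := by
    field_simp
    ring
  rw [hsum]
  field_simp
  ring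

theorem extinction_sub_div_eq_laplace {β θ L r s t : ℝ} (hβ : 0 < β) (hθ : 0 < θ)
    (hL0 : 0 ≤ L) (hL1 : L ≤ 1) (hr : 0 < r) (hs : 0 < s) (ht : 0 < t) :
    extinction β θ (r + t) - L * branching β θ (extinction β θ (r + t)) /
        (β * ((1 - L) * extinction β θ r + L * extinction β θ (r + t) + 2 * θ +
          extinction β θ s)) =
      laplace β θ ((1 - L) * extinction β θ r + L * extinction β θ (r + s)) t := by
  have hB : 0 < β * ((1 - L) * extinction β θ r + L * extinction β θ (r + t) + 2 * θ +
      extinction β θ s) := by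
    have := mix_extinction_pos hβ hθ hL0 hL1 hr (add_pos hr ht)
    have := extinction_pos hβ hθ hs
    positivity
  have hD := laplace_denom_pos hβ.le hθ
    (mix_extinction_pos hβ hθ hL0 hL1 hr (add_pos hr hs)).le ht.le
  -- clear the composite denominators while their positivity is still visible
  rw [sub_div' hB.ne', laplace, div_eq_div_iff hB.ne' hD.ne']
  have hR := exp_sub_one_pos hβ hθ hr
  have hS := exp_sub_one_pos hβ hθ hs
  have hRS := exp_sub_one_pos hβ hθ (add_pos hr hs)
  have hRT := exp_sub_one_pos hβ hθ (add_pos hr ht)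
  simp only [branching, extinction, mul_add, exp_add] at hRS hRT ⊢
  set R := exp (2 * β * θ * r)
  set S := exp (2 * β * θ * s)
  set T := exp (2 * β * θ * t)
  field_simp
  ring

end FellerCSBP

open FellerCSBP in
theorem deriv_gamma_identity (β θ lam s r : ℝ) (hβ : 0 < β) (hθ : 0 < θ)
    (hlam : 0 ≤ lam) (hs : 0 < s) (hr : 0 < r)
    (ψ : ℝ → ℝ) (hψ : ∀ x, ψ x = β * x ^ 2 + 2 * β * θ * x)
    (c : ℝ → ℝ) (hc : ∀ t, c t = 2 * θ / (exp (2 * β * θ * t) - 1))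
    (u : ℝ → ℝ → ℝ)
    (hu : ∀ lam t, u lam t = 2 * θ * lam / ((2 * θ + lam) * exp (2 * β * θ * t) - lam))
    (δ₁ : ℝ) (hδ₁ : δ₁ = (1 - exp (-lam)) * c r + exp (-lam) * c (r + s))
    (γ₁ : ℝ → ℝ) (hγ₁ : ∀ q, γ₁ q = (1 - exp (-lam)) * c r + exp (-lam) * c (q - s)) :
    ∀ q : ℝ, s + r < q →
      deriv γ₁ q * (γ₁ q - u (γ₁ q) s) / ψ (γ₁ q) + c (q - s) = u δ₁ (q - s - r) := by
  obtain rfl : ψ = branching β θ := funext hψ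
  obtain rfl : c = extinction β θ := funext hc
  obtain rfl : u = laplace β θ := funext fun x => funext (hu x)
  obtain rfl : γ₁ = fun q => (1 - exp (-lam)) * extinction β θ r +
      exp (-lam) * extinction β θ (q - s) := funext hγ₁
  subst hδ₁
  intro q hq
  set t := q - s - r
  have ht : 0 < t := by linarith
  have hqs : q - s = r + t := by ring
  have hderiv := (((hasDerivAt_extinction β θ (sub_ne_zero.1
    (exp_sub_one_pos hβ hθ (show 0 < q - s by linarith)).ne')).comp_sub_const q s).const_mul
    (exp (-lam))).const_add ((1 - exp (-lam)) * extinction β θ r)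
  have hL1 : exp (-lam) ≤ 1 := exp_le_one_iff.2 (by linarith)
  have hγ_pos := mix_extinction_pos hβ hθ (exp_pos _).le hL1 hr (add_pos hr ht)
  rw [hderiv.deriv]
  beta_reduce
  rw [hqs, mul_div_assoc, sub_laplace_div_branching hβ hθ hγ_pos hs,
    ← extinction_sub_div_eq_laplace hβ hθ (exp_pos _).le hL1 hr hs ht]
  ring
end
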